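/- arXiv:1604.00202 — 2 statements merged into one kernel-verified Lean document; each statement's English description precedes it below -/
import Mathlib

section
/- Let H be a visit subgraph with kernel nodes u and v, and suppose P_H(u) < P_H(v)/(1+ε). Then there exists a graph G compatible with H in which P(v) > (1+ε)·P(u); in particular H is not a ranking subgraph for u ≻ v. The graph G is obtained from H by adding N new sink nodes each pointed to by every frontier node of H, for N sufficiently large. -/
open scoped Classical BigOperators

/-- Out-degree of `z` in the directed graph with arc relation `A`. -/
noncomputable def outDeg {V : Type*} [Fintype V] (A : V → V → Prop) (z : V) : ℕ :=
  (Finset.univ.filter fun w => A z w).card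

/-- Random-surfer one-step transition matrix (rows of dangling nodes are zero). -/
noncomputable def stepM {V : Type*} [Fintype V] (A : V → V → Prop) : Matrix V V ℝ :=
  fun z w => if A z w then 1 / (outDeg A z : ℝ) else 0

/-- PageRank contribution of `z` to `v`:
`P(z,v) = (1-α)/n · Σ_τ α^τ · inf_τ(z,v)` where `inf_τ(z,v) = (M^τ) z v`. -/
noncomputable def contrib {V : Type*} [Fintype V] (α : ℝ) (A : V → V → Prop) (z v : V) : ℝ :=
  (1 - α) / (Fintype.card V : ℝ) * ∑' τ : ℕ, α ^ τ * (stepM A ^ τ) z v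

/-- PageRank score of `v` with damping factor `α`. -/
noncomputable def pagerank {V : Type*} [Fintype V] (α : ℝ) (A : V → V → Prop) (v : V) : ℝ :=
  (1 - α) / (Fintype.card V : ℝ) * ∑' τ : ℕ, α ^ τ * ∑ z, (stepM A ^ τ) z v

structure VisitSub (V : Type*) where
  verts : Set V
  arcs : V → V → Prop
  kernel : Set V

def VisitSub.IsVisit {V : Type*} (H : VisitSub V) : Prop :=
  H.kernel ⊆ H.verts ∧
  (∀ x y, H.arcs x y → x ∈ H.verts ∧ y ∈ H.verts) ∧
  (∀ x ∈ H.verts \ H.kernel, ∃ y ∈ H.kernel, H.arcs x y ∨ H.arcs y x) ∧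
  (∀ x y, H.arcs x y → x ∈ H.kernel ∨ y ∈ H.kernel)

def VisitSub.union {V : Type*} (H1 H2 : VisitSub V) : VisitSub V :=
  ⟨H1.verts ∪ H2.verts, fun x y => H1.arcs x y ∨ H2.arcs x y, H1.kernel ∪ H2.kernel⟩

def VisitSub.Compatible {V : Type*} (H : VisitSub V) (G : V → V → Prop) : Prop :=
  (∀ x y, H.arcs x y → G x y) ∧
  (∀ x y, x ∈ H.kernel ∨ y ∈ H.kernel → (G x y ↔ H.arcs x y))

/-- Out-degree inside the visit subgraph `H`. -/
noncomputable def VisitSub.outDegH {V : Type*} [Fintype V] (H : VisitSub V) (z : V) : ℕ :=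
  (Finset.univ.filter fun w => H.arcs z w).card

/-- Transition matrix restricted to kernel-only steps of `H`. -/
noncomputable def VisitSub.kerM {V : Type*} [Fintype V] (H : VisitSub V) : Matrix V V ℝ :=
  fun z w => if z ∈ H.kernel ∧ w ∈ H.kernel ∧ H.arcs z w then 1 / (H.outDegH z : ℝ) else 0

/-- Kernel contribution `P_H(z,v)`: PageRank contribution of `z` to `v` through paths whose
nodes all lie in the kernel of `H`, with restart probability `1/|H|`. -/
noncomputable def VisitSub.kernelContrib {V : Type*} [Fintype V]
    (α : ℝ) (H : VisitSub V) (z v : V) : ℝ :=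
  (1 - α) / (H.verts.ncard : ℝ) * ∑' τ : ℕ, α ^ τ * (H.kerM ^ τ) z v

/-- Kernel score `P_H(v) = Σ_z P_H(z,v)`. -/
noncomputable def VisitSub.kernelScore {V : Type*} [Fintype V]
    (α : ℝ) (H : VisitSub V) (v : V) : ℝ :=
  ∑ z, H.kernelContrib α z v

/-- `u` ranks strictly above `v` (beyond the `ε`-tie-threshold) in the graph `G`. -/
def RankAbove {V : Type*} [Fintype V] (α ε : ℝ) (G : V → V → Prop) (u v : V) : Prop :=
  pagerank α G u > (1 + ε) * pagerank α G v

/-- `H` is a ranking subgraph for `u, v`: both are kernel nodes and no two graphs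
compatible with `H` rank them in opposite (strict) ways. -/
def VisitSub.IsRankingPair {V : Type*} [Fintype V]
    (α ε : ℝ) (H : VisitSub V) (u v : V) : Prop :=
  u ∈ H.kernel ∧ v ∈ H.kernel ∧
  ¬ ∃ G G' : V → V → Prop, H.Compatible G ∧ H.Compatible G' ∧
      RankAbove α ε G u v ∧ RankAbove α ε G' v u

/-- Image of a visit subgraph under an injection into a larger vertex universe. -/
def VisitSub.map {V W : Type*} (f : V → W) (H : VisitSub V) : VisitSub W :=
  ⟨f '' H.verts, fun x y => ∃ a b, H.arcs a b ∧ x = f a ∧ y = f b, f '' H.kernel⟩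

/-- The graph obtained from `H` by adding `N` new sink nodes, each pointed to by every
frontier node of `H`. -/
def sinkExt {V : Type*} (H : VisitSub V) (N : ℕ) : (V ⊕ Fin N) → (V ⊕ Fin N) → Prop :=
  fun x y =>
    (∃ a b, H.arcs a b ∧ x = Sum.inl a ∧ y = Sum.inl b) ∨
    (∃ a, ∃ s : Fin N, a ∈ H.verts \ H.kernel ∧ x = Sum.inl a ∧ y = Sum.inr s)

/-!
In `G = sinkExt H N` every frontier node has out-degree at least `N`, so it sends at most
`|V| / N` of its mass back into the kernel, while the mass sitting on `V` never grows. Comparing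
the walk of `G` with the kernel-only walk of `H`, the excess arriving at a kernel node after `τ`
steps must have entered the kernel from the frontier at some earlier step, hence is at most
`τ |V|² / N`. Summing against `α^τ`,
`P(u) ≤ |H|/|G| · (P_H(u) + O(1/N))` and `P(v) ≥ |H|/|G| · P_H(v)`,
so the strict gap `(1 + ε) P_H(u) < P_H(v)` carries over to `G` once `N` is large.
-/

section Substochastic

open Finset Matrix

variable {W : Type*} [Fintype W] {M K : Matrix W W ℝ} {x : W → ℝ}

theorem vecMul_nonneg_of_nonneg (hx : 0 ≤ x) (hM : ∀ i j, 0 ≤ M i j) : 0 ≤ x ᵥ* M :=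
  fun j => sum_nonneg fun i _ => mul_nonneg (hx i) (hM i j)

theorem sum_row_le_one (hM0 : ∀ i j, 0 ≤ M i j) (hM1 : ∀ i, ∑ j, M i j ≤ 1) (i : W)
    (S : Finset W) : ∑ j ∈ S, M i j ≤ 1 :=
  (sum_le_sum_of_subset_of_nonneg (subset_univ S) fun j _ _ => hM0 i j).trans (hM1 i)

theorem sum_vecMul_le (hM0 : ∀ i j, 0 ≤ M i j) (hM1 : ∀ i, ∑ j, M i j ≤ 1) (hx : 0 ≤ x)
    {T : Finset W} (hT : ∀ i ∉ T, ∀ j ∈ T, M i j = 0) :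
    ∑ j ∈ T, (x ᵥ* M) j ≤ ∑ j ∈ T, x j :=
  calc ∑ j ∈ T, (x ᵥ* M) j = ∑ i ∈ T, x i * ∑ j ∈ T, M i j := by
        simp only [vecMul, dotProduct, mul_sum]
        rw [sum_comm, ← sum_subset (subset_univ T)]
        intro i _ hi
        exact sum_eq_zero fun j hj => by rw [hT i hi j hj, mul_zero]
    _ ≤ ∑ i ∈ T, x i := sum_le_sum fun i _ =>
        mul_le_of_le_one_right (hx i) (sum_row_le_one hM0 hM1 i T)

variable [DecidableEq W]

theorem vecMul_pow_nonneg (hx : 0 ≤ x) (hM : ∀ i j, 0 ≤ M i j) (τ : ℕ) : 0 ≤ x ᵥ* M ^ τ := by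
  induction τ with
  | zero => simpa using hx
  | succ τ ih => rw [pow_succ, ← vecMul_vecMul]; exact vecMul_nonneg_of_nonneg ih hM

theorem vecMul_pow_le_vecMul_pow (hx : 0 ≤ x) (hK : ∀ i j, 0 ≤ K i j)
    (hKM : ∀ i j, K i j ≤ M i j) (τ : ℕ) : x ᵥ* K ^ τ ≤ x ᵥ* M ^ τ := by
  have hM : ∀ i j, 0 ≤ M i j := fun i j => (hK i j).trans (hKM i j)
  induction τ with
  | zero => simp
  | succ τ ih =>
    intro j
    rw [pow_succ, pow_succ, ← vecMul_vecMul, ← vecMul_vecMul]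
    exact sum_le_sum fun i _ =>
      mul_le_mul (ih i) (hKM i j) (hK i j) (vecMul_pow_nonneg hx hM τ i)

theorem sum_vecMul_pow_le (hM0 : ∀ i j, 0 ≤ M i j) (hM1 : ∀ i, ∑ j, M i j ≤ 1) (hx : 0 ≤ x)
    {T : Finset W} (hT : ∀ i ∉ T, ∀ j ∈ T, M i j = 0) (τ : ℕ) :
    ∑ j ∈ T, (x ᵥ* M ^ τ) j ≤ ∑ j ∈ T, x j := by
  induction τ with
  | zero => simp
  | succ τ ih =>
    rw [pow_succ, ← vecMul_vecMul]
    exact (sum_vecMul_le hM0 hM1 (vecMul_pow_nonneg hx hM0 τ) hT).trans ih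

theorem vecMul_pow_apply_le (hM0 : ∀ i j, 0 ≤ M i j) (hM1 : ∀ i, ∑ j, M i j ≤ 1)
    (hx : 0 ≤ x) (τ : ℕ) (j : W) : (x ᵥ* M ^ τ) j ≤ ∑ i, x i :=
  (single_le_sum (fun i _ => vecMul_pow_nonneg hx hM0 τ i) (mem_univ j)).trans
    (sum_vecMul_pow_le hM0 hM1 hx (by simp) τ)

theorem summable_geometric_mul_vecMul_pow (hM0 : ∀ i j, 0 ≤ M i j)
    (hM1 : ∀ i, ∑ j, M i j ≤ 1) (hx : 0 ≤ x) {α : ℝ} (hα0 : 0 ≤ α) (hα1 : α < 1) (j : W) :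
    Summable fun τ : ℕ => α ^ τ * (x ᵥ* M ^ τ) j := by
  refine Summable.of_nonneg_of_le (fun τ => mul_nonneg (pow_nonneg hα0 τ)
    (vecMul_pow_nonneg hx hM0 τ j)) (fun τ => ?_)
    ((summable_geometric_of_lt_one hα0 hα1).mul_right (∑ i, x i))
  exact mul_le_mul_of_nonneg_left (vecMul_pow_apply_le hM0 hM1 hx τ j) (pow_nonneg hα0 τ)

theorem sum_vecMul_sub_vecMul_le {S : Finset W} (hM0 : ∀ i j, 0 ≤ M i j)
    (hM1 : ∀ i, ∑ j, M i j ≤ 1) (hKS : ∀ i, ∀ j ∈ S, K i j = if i ∈ S then M i j else 0)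
    {c d : W → ℝ} (hdc : ∀ i ∈ S, d i ≤ c i) :
    ∑ j ∈ S, ((c ᵥ* M) j - (d ᵥ* K) j)
      ≤ ∑ i ∈ S, (c i - d i) + ∑ i ∈ Sᶜ, c i * ∑ j ∈ S, M i j := by
  have hcol : ∀ j ∈ S, (c ᵥ* M) j - (d ᵥ* K) j
      = ∑ i ∈ S, (c i - d i) * M i j + ∑ i ∈ Sᶜ, c i * M i j := by
    intro j hj
    have hK : (d ᵥ* K) j = ∑ i ∈ S, d i * M i j := by
      simp only [vecMul, dotProduct, hKS _ j hj, mul_ite, mul_zero, sum_ite_mem, univ_inter]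
    have hM : (c ᵥ* M) j = ∑ i ∈ S, c i * M i j + ∑ i ∈ Sᶜ, c i * M i j :=
      (sum_add_sum_compl S _).symm
    rw [hK, hM]
    simp only [sub_mul, sum_sub_distrib]
    ring
  calc ∑ j ∈ S, ((c ᵥ* M) j - (d ᵥ* K) j)
      = ∑ i ∈ S, (c i - d i) * ∑ j ∈ S, M i j + ∑ i ∈ Sᶜ, c i * ∑ j ∈ S, M i j := by
        simp only [sum_congr rfl hcol, sum_add_distrib, mul_sum]
        rw [sum_comm, sum_comm (s := S) (t := Sᶜ)]
    _ ≤ _ := by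
        gcongr with i hi
        exact mul_le_of_le_one_right (sub_nonneg.2 (hdc i hi)) (sum_row_le_one hM0 hM1 i S)

theorem sum_vecMul_pow_sub_le {S : Finset W} (hM0 : ∀ i j, 0 ≤ M i j)
    (hM1 : ∀ i, ∑ j, M i j ≤ 1) (hx : 0 ≤ x) (hK0 : ∀ i j, 0 ≤ K i j)
    (hKM : ∀ i j, K i j ≤ M i j) (hKS : ∀ i, ∀ j ∈ S, K i j = if i ∈ S then M i j else 0)
    (τ : ℕ) :
    ∑ j ∈ S, ((x ᵥ* M ^ τ) j - (x ᵥ* K ^ τ) j)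
      ≤ ∑ t ∈ range τ, ∑ i ∈ Sᶜ, (x ᵥ* M ^ t) i * ∑ j ∈ S, M i j := by
  induction τ with
  | zero => simp
  | succ τ ih =>
    rw [pow_succ, pow_succ, ← vecMul_vecMul, ← vecMul_vecMul, sum_range_succ]
    refine (sum_vecMul_sub_vecMul_le hM0 hM1 hKS
      fun i _ => vecMul_pow_le_vecMul_pow hx hK0 hKM τ i).trans ?_
    gcongr

/-- The instance on `l ⊕ m` is a separate binder so that the lemma also applies to the classical
instance that `pagerank` uses on `V ⊕ Fin N`. -/
theorem vecMul_fromBlocks_zero_pow_inl {R l m : Type*} [Semiring R] [Fintype l] [Fintype m]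
    [DecidableEq l] [DecidableEq (l ⊕ m)] (A : Matrix l l R) (x : l ⊕ m → R) (τ : ℕ) :
    (x ᵥ* fromBlocks A 0 0 (0 : Matrix m m R) ^ τ) ∘ Sum.inl = (x ∘ Sum.inl) ᵥ* A ^ τ := by
  induction τ with
  | zero => simp
  | succ τ ih =>
    rw [pow_succ, pow_succ, ← vecMul_vecMul, ← vecMul_vecMul, vecMul_fromBlocks]
    simp [ih]

end Substochastic

section PageRank

open Finset Matrix

variable {V : Type*} [Fintype V]

theorem stepM_nonneg (A : V → V → Prop) (i j : V) : 0 ≤ stepM A i j := by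
  unfold stepM; split <;> positivity

theorem sum_stepM_le_one (A : V → V → Prop) (i : V) : ∑ j, stepM A i j ≤ 1 := by
  simp only [stepM, sum_ite, sum_const_zero, add_zero, sum_const, nsmul_eq_mul]
  exact (mul_one_div _ _).trans_le (div_self_le_one (outDeg A i : ℝ))

theorem pagerank_eq_tsum [DecidableEq V] (α : ℝ) (A : V → V → Prop) (v : V) :
    pagerank α A v = (1 - α) / Fintype.card V * ∑' τ : ℕ, α ^ τ * (1 ᵥ* stepM A ^ τ) v := by
  simp only [pagerank, vecMul, dotProduct, Pi.one_apply, one_mul]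
  congr!

namespace VisitSub

variable (H : VisitSub V)

theorem kerM_nonneg (i j : V) : 0 ≤ H.kerM i j := by
  unfold kerM; split <;> positivity

theorem kerM_le_stepM (i j : V) : H.kerM i j ≤ stepM H.arcs i j := by
  unfold kerM stepM outDegH outDeg
  split_ifs with h h' <;> first | rfl | positivity | exact absurd h.2.2 h'

theorem sum_kerM_le_one (i : V) : ∑ j, H.kerM i j ≤ 1 :=
  (sum_le_sum fun j _ => H.kerM_le_stepM i j).trans (sum_stepM_le_one _ i)

noncomputable def kernelWalkSum (α : ℝ) (v : V) : ℝ :=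
  ∑' τ : ℕ, α ^ τ * (1 ᵥ* H.kerM ^ τ) v

theorem kernelScore_eq {α : ℝ} (hα0 : 0 ≤ α) (hα1 : α < 1) (v : V) :
    H.kernelScore α v = (1 - α) / H.verts.ncard * H.kernelWalkSum α v := by
  have hsum (z : V) : Summable fun τ : ℕ => α ^ τ * (H.kerM ^ τ) z v := by
    simpa only [single_one_vecMul, row_apply] using summable_geometric_mul_vecMul_pow
      H.kerM_nonneg H.sum_kerM_le_one (Pi.single_nonneg.2 zero_le_one : 0 ≤ Pi.single z 1)
      hα0 hα1 v
  simp only [kernelScore, kernelContrib, kernelWalkSum, ← mul_sum]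
  rw [← Summable.tsum_finsetSum fun z _ => hsum z]
  simp only [← mul_sum, vecMul, dotProduct, Pi.one_apply, one_mul]

end VisitSub

end PageRank

section SinkExtension

open Finset Matrix

variable {V : Type*} {H : VisitSub V} {N : ℕ}

@[simp] theorem sinkExt_inl_inl {a b : V} : sinkExt H N (.inl a) (.inl b) ↔ H.arcs a b := by
  simp [sinkExt]

@[simp] theorem sinkExt_inl_inr {a : V} {s : Fin N} :
    sinkExt H N (.inl a) (.inr s) ↔ a ∈ H.verts \ H.kernel := by
  simp [sinkExt]

@[simp] theorem not_sinkExt_inr {s : Fin N} {w : V ⊕ Fin N} : ¬ sinkExt H N (.inr s) w := by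
  simp [sinkExt]

theorem sinkExt_compatible (H : VisitSub V) (N : ℕ) :
    (H.map (Sum.inl : V → V ⊕ Fin N)).Compatible (sinkExt H N) := by
  refine ⟨fun x y ⟨a, b, h, hx, hy⟩ => ?_, fun x y hxy => ?_⟩
  · subst hx hy; simpa using h
  · rcases x with a | s <;> rcases y with b | t <;>
      simp_all [VisitSub.map]

variable [Fintype V]

theorem outDeg_sinkExt_of_mem_kernel {a : V} (ha : a ∈ H.kernel) :
    outDeg (sinkExt H N) (.inl a) = H.outDegH a := by
  simp only [outDeg, VisitSub.outDegH, card_filter, Fintype.sum_sum_type, sinkExt_inl_inl,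
    sinkExt_inl_inr]
  simp [ha]

theorem le_outDeg_sinkExt {a : V} (ha : a ∈ H.verts \ H.kernel) :
    N ≤ outDeg (sinkExt H N) (.inl a) := by
  simp only [outDeg, card_filter, Fintype.sum_sum_type, sinkExt_inl_inr]
  simp [ha]

theorem stepM_sinkExt_inr (s : Fin N) (w : V ⊕ Fin N) : stepM (sinkExt H N) (.inr s) w = 0 :=
  if_neg not_sinkExt_inr

theorem stepM_sinkExt_of_mem_kernel {a b : V} (ha : a ∈ H.kernel) (hb : b ∈ H.kernel) :
    stepM (sinkExt H N) (.inl a) (.inl b) = H.kerM a b := by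
  simp [stepM, VisitSub.kerM, outDeg_sinkExt_of_mem_kernel ha, ha, hb]

theorem stepM_sinkExt_le (harcs : ∀ x y, H.arcs x y → x ∈ H.verts ∧ y ∈ H.verts) (hN : 0 < N)
    {a : V} (ha : a ∉ H.kernel) (b : V) : stepM (sinkExt H N) (.inl a) (.inl b) ≤ 1 / N := by
  unfold stepM
  split_ifs with h
  · rw [sinkExt_inl_inl] at h
    gcongr
    exact le_outDeg_sinkExt ⟨(harcs a b h).1, ha⟩
  · positivity

namespace VisitSub

variable (H N)

noncomputable def kerMExt : Matrix (V ⊕ Fin N) (V ⊕ Fin N) ℝ :=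
  fromBlocks H.kerM 0 0 0

noncomputable def kernelExt : Finset (V ⊕ Fin N) :=
  (univ.filter (· ∈ H.kernel)).disjSum (∅ : Finset (Fin N))

variable {H N}

theorem kerMExt_nonneg (i j : V ⊕ Fin N) : 0 ≤ H.kerMExt N i j := by
  rcases i with a | s <;> rcases j with b | t <;> simp [kerMExt, kerM_nonneg]

theorem kerM_le_stepM_sinkExt (a b : V) : H.kerM a b ≤ stepM (sinkExt H N) (.inl a) (.inl b) := by
  by_cases h : a ∈ H.kernel ∧ b ∈ H.kernel
  · rw [stepM_sinkExt_of_mem_kernel h.1 h.2]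
  · rw [kerM, if_neg fun h' => h ⟨h'.1, h'.2.1⟩]
    exact stepM_nonneg _ _ _

theorem kerMExt_le_stepM_sinkExt (i j : V ⊕ Fin N) : H.kerMExt N i j ≤ stepM (sinkExt H N) i j := by
  rcases i with a | s <;> rcases j with b | t <;>
    simp [kerMExt, kerM_le_stepM_sinkExt, stepM_nonneg]

theorem kerMExt_eq_ite (i : V ⊕ Fin N) {j : V ⊕ Fin N} (hj : j ∈ H.kernelExt N) :
    H.kerMExt N i j = if i ∈ H.kernelExt N then stepM (sinkExt H N) i j else 0 := by
  rcases j with b | t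
  · have hb : b ∈ H.kernel := by simpa [kernelExt] using hj
    rcases i with a | s
    · by_cases ha : a ∈ H.kernel
      · simp [kerMExt, kernelExt, ha, stepM_sinkExt_of_mem_kernel ha hb]
      · simp [kerMExt, kernelExt, ha, kerM]
    · simp [kerMExt, kernelExt]
  · simp [kernelExt] at hj

theorem vecMul_kerMExt_pow_inl (τ : ℕ) (v : V) :
    (1 ᵥ* H.kerMExt N ^ τ) (.inl v) = (1 ᵥ* H.kerM ^ τ) v :=
  congrFun (vecMul_fromBlocks_zero_pow_inl H.kerM 1 τ) v

end VisitSub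

theorem sum_vecMul_stepM_sinkExt_pow_inl_le (t : ℕ) :
    ∑ a, (1 ᵥ* stepM (sinkExt H N) ^ t) (.inl a) ≤ Fintype.card V := by
  have hT : ∀ i ∉ (univ : Finset V).disjSum (∅ : Finset (Fin N)),
      ∀ j ∈ (univ : Finset V).disjSum (∅ : Finset (Fin N)), stepM (sinkExt H N) i j = 0 := by
    rintro (a | s) hi j -
    · simp at hi
    · exact stepM_sinkExt_inr s j
  simpa [sum_disjSum] using
    sum_vecMul_pow_le (stepM_nonneg _) (sum_stepM_le_one _) zero_le_one hT t

theorem sum_compl_kernelExt_le (harcs : ∀ x y, H.arcs x y → x ∈ H.verts ∧ y ∈ H.verts)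
    (hN : 0 < N) {c : V ⊕ Fin N → ℝ} (hc : 0 ≤ c) :
    ∑ i ∈ (H.kernelExt N)ᶜ, c i * ∑ j ∈ H.kernelExt N, stepM (sinkExt H N) i j
      ≤ Fintype.card V / N * ∑ a, c (.inl a) := by
  set g : V ⊕ Fin N → ℝ := Sum.elim (fun _ => Fintype.card V / N) 0
  have hg : 0 ≤ g := by rintro (a | s) <;> simp [g]; positivity
  have hrow : ∀ i ∈ (H.kernelExt N)ᶜ, ∑ j ∈ H.kernelExt N, stepM (sinkExt H N) i j ≤ g i := by
    rintro (a | s) hi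
    · have ha : a ∉ H.kernel := by simpa [VisitSub.kernelExt] using hi
      calc ∑ j ∈ H.kernelExt N, stepM (sinkExt H N) (.inl a) j
          = ∑ b ∈ univ.filter (· ∈ H.kernel), stepM (sinkExt H N) (.inl a) (.inl b) := by
            simp [VisitSub.kernelExt]
        _ ≤ ∑ b ∈ univ.filter (· ∈ H.kernel), (1 / N : ℝ) :=
            sum_le_sum fun b _ => stepM_sinkExt_le harcs hN ha b
        _ ≤ g (.inl a) := by
            rw [sum_const, nsmul_eq_mul, mul_one_div]
            exact div_le_div_of_nonneg_right (mod_cast card_filter_le _ _) (Nat.cast_nonneg N)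
    · simp [g, stepM_sinkExt_inr]
  calc _ ≤ ∑ i ∈ (H.kernelExt N)ᶜ, c i * g i :=
        sum_le_sum fun i hi => mul_le_mul_of_nonneg_left (hrow i hi) (hc i)
    _ ≤ ∑ i, c i * g i :=
        sum_le_sum_of_subset_of_nonneg (subset_univ _) fun i _ _ => mul_nonneg (hc i) (hg i)
    _ = _ := by simp [g, Fintype.sum_sum_type, mul_sum, mul_comm]

theorem vecMul_stepM_sinkExt_pow_inl_le (harcs : ∀ x y, H.arcs x y → x ∈ H.verts ∧ y ∈ H.verts)
    (hN : 0 < N) {u : V} (hu : u ∈ H.kernel) (τ : ℕ) :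
    (1 ᵥ* stepM (sinkExt H N) ^ τ) (.inl u)
      ≤ (1 ᵥ* H.kerM ^ τ) u + τ * (Fintype.card V ^ 2 / N) := by
  set M := stepM (sinkExt H N)
  set S := H.kernelExt N
  have hKM : 1 ᵥ* H.kerMExt N ^ τ ≤ 1 ᵥ* M ^ τ :=
    vecMul_pow_le_vecMul_pow zero_le_one VisitSub.kerMExt_nonneg VisitSub.kerMExt_le_stepM_sinkExt τ
  have hdiff : (1 ᵥ* M ^ τ) (.inl u) - (1 ᵥ* H.kerMExt N ^ τ) (.inl u)
      ≤ ∑ j ∈ S, ((1 ᵥ* M ^ τ) j - (1 ᵥ* H.kerMExt N ^ τ) j) :=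
    single_le_sum (f := fun j => (1 ᵥ* M ^ τ) j - (1 ᵥ* H.kerMExt N ^ τ) j)
      (fun j _ => sub_nonneg.2 (hKM j)) (by simpa [S, VisitSub.kernelExt] using hu)
  have hleak := sum_vecMul_pow_sub_le (stepM_nonneg (sinkExt H N)) (sum_stepM_le_one _) zero_le_one
    VisitSub.kerMExt_nonneg VisitSub.kerMExt_le_stepM_sinkExt VisitSub.kerMExt_eq_ite τ
  have hbound : ∑ t ∈ range τ, ∑ i ∈ Sᶜ, (1 ᵥ* M ^ t) i * ∑ j ∈ S, M i j
      ≤ τ * (Fintype.card V ^ 2 / N) := by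
    calc _ ≤ ∑ _t ∈ range τ, (Fintype.card V ^ 2 / N : ℝ) := sum_le_sum fun t _ =>
          (sum_compl_kernelExt_le harcs hN (vecMul_pow_nonneg zero_le_one (stepM_nonneg _) t)).trans
            (by rw [sq, mul_div_right_comm]; gcongr; exact sum_vecMul_stepM_sinkExt_pow_inl_le t)
      _ = _ := by simp
  rw [← VisitSub.vecMul_kerMExt_pow_inl]
  exact sub_le_iff_le_add'.1 (hdiff.trans (hleak.trans hbound))

theorem le_pagerank_sinkExt_inl {α : ℝ} (hα0 : 0 ≤ α) (hα1 : α < 1) (v : V) :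
    (1 - α) / Fintype.card (V ⊕ Fin N) * H.kernelWalkSum α v
      ≤ pagerank α (sinkExt H N) (.inl v) := by
  rw [pagerank_eq_tsum]
  refine mul_le_mul_of_nonneg_left ?_ (div_nonneg (sub_nonneg.2 hα1.le) (Nat.cast_nonneg _))
  refine Summable.tsum_le_tsum (fun τ => ?_)
    (summable_geometric_mul_vecMul_pow H.kerM_nonneg H.sum_kerM_le_one zero_le_one hα0 hα1 v)
    (summable_geometric_mul_vecMul_pow (stepM_nonneg _) (sum_stepM_le_one _) zero_le_one hα0 hα1 _)
  rw [← VisitSub.vecMul_kerMExt_pow_inl]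
  gcongr
  exact vecMul_pow_le_vecMul_pow zero_le_one VisitSub.kerMExt_nonneg
    VisitSub.kerMExt_le_stepM_sinkExt τ _

theorem pagerank_sinkExt_inl_le (harcs : ∀ x y, H.arcs x y → x ∈ H.verts ∧ y ∈ H.verts)
    {α : ℝ} (hα0 : 0 ≤ α) (hα1 : α < 1) (hN : 0 < N) {u : V} (hu : u ∈ H.kernel) :
    pagerank α (sinkExt H N) (.inl u) ≤ (1 - α) / Fintype.card (V ⊕ Fin N)
      * (H.kernelWalkSum α u + Fintype.card V ^ 2 * α / (1 - α) ^ 2 / N) := by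
  rw [pagerank_eq_tsum]
  refine mul_le_mul_of_nonneg_left ?_ (div_nonneg (sub_nonneg.2 hα1.le) (Nat.cast_nonneg _))
  have hα : ‖α‖ < 1 := by rwa [Real.norm_of_nonneg hα0]
  have hgeom := hasSum_coe_mul_geometric_of_norm_lt_one hα
  calc ∑' τ : ℕ, α ^ τ * (1 ᵥ* stepM (sinkExt H N) ^ τ) (.inl u)
      ≤ ∑' τ : ℕ, (α ^ τ * (1 ᵥ* H.kerM ^ τ) u + Fintype.card V ^ 2 / N * (τ * α ^ τ)) := by
        refine Summable.tsum_le_tsum (fun τ => ?_)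
          (summable_geometric_mul_vecMul_pow (stepM_nonneg _) (sum_stepM_le_one _)
            zero_le_one hα0 hα1 _)
          ((summable_geometric_mul_vecMul_pow H.kerM_nonneg H.sum_kerM_le_one zero_le_one
            hα0 hα1 u).add (hgeom.summable.mul_left _))
        calc _ ≤ α ^ τ * ((1 ᵥ* H.kerM ^ τ) u + τ * (Fintype.card V ^ 2 / N)) :=
              mul_le_mul_of_nonneg_left (vecMul_stepM_sinkExt_pow_inl_le harcs hN hu τ)
                (pow_nonneg hα0 τ)
          _ = _ := by ring
    _ = H.kernelWalkSum α u + Fintype.card V ^ 2 * α / (1 - α) ^ 2 / N := by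
        rw [Summable.tsum_add (summable_geometric_mul_vecMul_pow H.kerM_nonneg H.sum_kerM_le_one
          zero_le_one hα0 hα1 u) (hgeom.summable.mul_left _), tsum_mul_left, hgeom.tsum_eq]
        simp only [VisitSub.kernelWalkSum]
        ring

end SinkExtension

theorem exists_nat_mul_add_div_lt {a b c C : ℝ} (hab : c * a < b) (hc : 0 ≤ c) (hC : 0 ≤ C) :
    ∃ N : ℕ, 0 < N ∧ c * (a + C / N) < b := by
  obtain ⟨N, hN⟩ := exists_nat_gt (c * C / (b - c * a))
  have hN0 : (0 : ℝ) < N := lt_of_le_of_lt (div_nonneg (by positivity) (by linarith)) hN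
  refine ⟨N, mod_cast hN0, ?_⟩
  rw [div_lt_iff₀ (by linarith)] at hN
  have : c * C / N < b - c * a := by rw [div_lt_iff₀ hN0]; linarith
  calc c * (a + C / N) = c * a + c * C / N := by ring
    _ < b := by linarith

theorem VisitSub.kernelWalkSum_lt_of_kernelScore_lt {V : Type*} [Fintype V] {H : VisitSub V}
    {α ε : ℝ} (hα0 : 0 ≤ α) (hα1 : α < 1) (hε : 0 < ε) {u v : V}
    (hlt : H.kernelScore α u < H.kernelScore α v / (1 + ε)) :
    (1 + ε) * H.kernelWalkSum α u < H.kernelWalkSum α v := by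
  rw [H.kernelScore_eq hα0 hα1, H.kernelScore_eq hα0 hα1, lt_div_iff₀ (by linarith)] at hlt
  exact lt_of_mul_lt_mul_left (a := (1 - α) / H.verts.ncard) (by linarith)
    (div_nonneg (by linarith) (Nat.cast_nonneg _))

theorem stmt_8_general {V : Type*} [Fintype V] (α ε : ℝ) (hα : α ∈ Set.Ioo (0:ℝ) 1) (hε : 0 < ε)
    (H : VisitSub V) (hH : H.IsVisit) (u v : V)
    (hu : u ∈ H.kernel)
    (hlt : H.kernelScore α u < H.kernelScore α v / (1 + ε)) :
    ∃ N : ℕ, (H.map (Sum.inl : V → V ⊕ Fin N)).Compatible (sinkExt H N) ∧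
      pagerank α (sinkExt H N) (Sum.inl v) > (1 + ε) * pagerank α (sinkExt H N) (Sum.inl u) := by
  obtain ⟨hα0, hα1⟩ := hα
  obtain ⟨N, hN, hgap⟩ := exists_nat_mul_add_div_lt
    (H.kernelWalkSum_lt_of_kernelScore_lt hα0.le hα1 hε hlt) (by linarith)
    (by positivity : (0 : ℝ) ≤ Fintype.card V ^ 2 * α / (1 - α) ^ 2)
  refine ⟨N, sinkExt_compatible H N, ?_⟩
  have hw : 0 < (1 - α) / Fintype.card (V ⊕ Fin N) :=
    div_pos (by linarith) (Nat.cast_pos.2 (Fintype.card_pos_iff.2 ⟨.inl u⟩))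
  calc (1 + ε) * pagerank α (sinkExt H N) (.inl u)
      ≤ (1 + ε) * ((1 - α) / Fintype.card (V ⊕ Fin N)
          * (H.kernelWalkSum α u + Fintype.card V ^ 2 * α / (1 - α) ^ 2 / N)) := by
        gcongr
        exact pagerank_sinkExt_inl_le hH.2.1 hα0.le hα1 hN hu
    _ < (1 - α) / Fintype.card (V ⊕ Fin N) * H.kernelWalkSum α v := by
        rw [mul_left_comm]; exact mul_lt_mul_of_pos_left hgap hw
    _ ≤ pagerank α (sinkExt H N) (.inl v) := le_pagerank_sinkExt_inl hα0.le hα1 v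

/-- If `P_H(u) < P_H(v)/(1+ε)` then, for `N` sufficiently large, the graph obtained from
`H` by adding `N` sinks pointed to by every frontier node is compatible with `H` and
satisfies `P(v) > (1+ε)·P(u)`; in particular `H` is not a ranking subgraph for `u ≻ v`. -/
theorem stmt_8 {V : Type*} [Fintype V] (α ε : ℝ) (hα : α ∈ Set.Ioo (0:ℝ) 1) (hε : 0 < ε)
    (H : VisitSub V) (hH : H.IsVisit) (u v : V)
    (hu : u ∈ H.kernel) (hv : v ∈ H.kernel)
    (hlt : H.kernelScore α u < H.kernelScore α v / (1 + ε)) :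
    ∃ N : ℕ, (H.map (Sum.inl : V → V ⊕ Fin N)).Compatible (sinkExt H N) ∧
      pagerank α (sinkExt H N) (Sum.inl v) > (1 + ε) * pagerank α (sinkExt H N) (Sum.inl u) :=
  stmt_8_general α ε hα hε H hH u v hu hlt
end

section
/- Reduction correctness (DOMINATING SET direction 2): With G constructed from G0 as in the reduction, if G admits a ranking subgraph of kernel size 3+m for u ≻ v, then G0 admits a dominating set of size m. -/
open scoped Classical BigOperators


/-- Vertex universe of the reduction graph: `u_1,…,u_n`, then `u'_1,…,u'_n`, then the
three special nodes `u`, `v`, `w`. -/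
abbrev WT (n : ℕ) := Sum (Fin n) (Sum (Fin n) (Fin 3))

def uN {n : ℕ} (i : Fin n) : WT n := Sum.inl i
def u'N {n : ℕ} (i : Fin n) : WT n := Sum.inr (Sum.inl i)
def uu (n : ℕ) : WT n := Sum.inr (Sum.inr 0)
def vv (n : ℕ) : WT n := Sum.inr (Sum.inr 1)
def ww (n : ℕ) : WT n := Sum.inr (Sum.inr 2)

/-- The graph `G` built from `G0` in the DOMINATING SET reduction: `u` and `v` have
self-loops, each `u_i` points to `u`, `w` points to `v`, each `u'_i` points to `w` and to
`u_j` iff the arc `(v_i, v_j)` exists in `G0`. -/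
def GA {n : ℕ} (G0 : Fin n → Fin n → Prop) : WT n → WT n → Prop := fun x y =>
  (x = uu n ∧ y = uu n) ∨ (x = vv n ∧ y = vv n) ∨
  (∃ i, x = uN i ∧ y = uu n) ∨ (x = ww n ∧ y = vv n) ∨
  (∃ i, x = u'N i ∧ y = ww n) ∨ (∃ i j, G0 i j ∧ x = u'N i ∧ y = uN j)

/-- `D` is a dominating set of `G0`: every node not in `D` has an outgoing arc to a node
of `D`. -/
def Dominating {n : ℕ} (G0 : Fin n → Fin n → Prop) (D : Finset (Fin n)) : Prop :=
  ∀ i, i ∉ D → ∃ j ∈ D, G0 i j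

/-- The visit subgraph of `G` generated by a kernel set `K`: its vertices are `K` together
with the neighbours of `K`, and its arcs are the arcs of `G` with an endpoint in `K`. -/
def genVS {V : Type*} (G : V → V → Prop) (K : Set V) : VisitSub V :=
  ⟨K ∪ {x | ∃ y ∈ K, G x y ∨ G y x}, fun x y => G x y ∧ (x ∈ K ∨ y ∈ K), K⟩

/-- Characterization of ranking subgraphs for `u ≻ v`: both target nodes are kernel nodes,
`P_H(u) ≥ P_H(v)/(1+ε)`, and for every frontier node the kernel contributions of its
children to `u` dominate those to `v`. -/
def RankChar {V : Type*} [Fintype V] (α ε : ℝ) (H : VisitSub V) (u v : V) : Prop :=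
  u ∈ H.kernel ∧ v ∈ H.kernel ∧
  H.kernelScore α u ≥ H.kernelScore α v / (1 + ε) ∧
  ∀ w ∈ H.verts \ H.kernel,
    ∑ z ∈ Finset.univ.filter (fun z => H.arcs w z), H.kernelContrib α z u ≥
    ∑ z ∈ Finset.univ.filter (fun z => H.arcs w z), H.kernelContrib α z v


section AuxMat
variable {V : Type*} [Fintype V]

lemma kerM_nonneg (H : VisitSub V) (z w : V) : 0 ≤ H.kerM z w := by
  unfold VisitSub.kerM; split_ifs <;> positivity

lemma kerM_pow_nonneg (H : VisitSub V) (τ : ℕ) (z w : V) : 0 ≤ (H.kerM ^ τ) z w := by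
  induction τ generalizing z w with
  | zero => rw [pow_zero, Matrix.one_apply]; split_ifs <;> norm_num
  | succ t ih =>
    rw [pow_succ, Matrix.mul_apply]
    exact Finset.sum_nonneg fun y _ => mul_nonneg (ih z y) (kerM_nonneg H y w)

lemma arcs_of_kerM_ne (H : VisitSub V) {z w : V} (h : H.kerM z w ≠ 0) :
    z ∈ H.kernel ∧ w ∈ H.kernel ∧ H.arcs z w := by
  by_contra hc
  exact h (by unfold VisitSub.kerM; rw [if_neg hc])

lemma kerM_pow_zero_eq (H : VisitSub V) (z : V) : (H.kerM ^ 0) z z = 1 := by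
  rw [pow_zero, Matrix.one_apply_eq]

lemma kerM_pow_zero_ne (H : VisitSub V) {z w : V} (h : z ≠ w) : (H.kerM ^ 0) z w = 0 := by
  rw [pow_zero, Matrix.one_apply_ne h]

lemma kerM_pow_one (H : VisitSub V) (z w : V) : (H.kerM ^ 1) z w = H.kerM z w := by
  rw [pow_one]

lemma kerM_pow_succ (H : VisitSub V) (t : ℕ) (z w : V) :
    (H.kerM ^ (t + 1)) z w = ∑ y, H.kerM z y * (H.kerM ^ t) y w := by
  rw [pow_succ', Matrix.mul_apply]

lemma kerM_pow_closed (H : VisitSub V) {S : Set V} {u : V}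
    (hS : ∀ z ∈ S, ∀ y, H.arcs z y → y ∈ S) (hu : u ∉ S) :
    ∀ τ, ∀ z ∈ S, (H.kerM ^ τ) z u = 0 := by
  intro τ
  induction τ with
  | zero =>
    intro z hz
    exact kerM_pow_zero_ne H (fun h => hu (h ▸ hz))
  | succ t ih =>
    intro z hz
    rw [kerM_pow_succ]
    refine Finset.sum_eq_zero fun y _ => ?_
    by_cases hy : H.kerM z y = 0
    · rw [hy, zero_mul]
    · rw [ih y (hS z hz y (arcs_of_kerM_ne H hy).2.2), mul_zero]

lemma kerM_row_sum (H : VisitSub V) (z : V) : ∑ w, H.kerM z w ≤ 1 := by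
  classical
  have h1 : ∀ w, H.kerM z w ≤ if H.arcs z w then 1 / (H.outDegH z : ℝ) else 0 := by
    intro w
    by_cases h : H.arcs z w
    · rw [if_pos h]
      unfold VisitSub.kerM
      split_ifs
      · exact le_rfl
      · positivity
    · have hz : H.kerM z w = 0 := by
        unfold VisitSub.kerM; rw [if_neg (by tauto)]
      rw [hz, if_neg h]
  calc ∑ w, H.kerM z w ≤ ∑ w, (if H.arcs z w then 1 / (H.outDegH z : ℝ) else 0) :=
        Finset.sum_le_sum fun w _ => h1 w
    _ = ∑ w ∈ Finset.univ.filter (fun w => H.arcs z w), (1 / (H.outDegH z : ℝ)) :=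
        (Finset.sum_filter _ _).symm
    _ = (H.outDegH z : ℝ) * (1 / (H.outDegH z : ℝ)) := by
        rw [Finset.sum_const, nsmul_eq_mul]; rfl
    _ ≤ 1 := by
        rcases eq_or_ne (H.outDegH z) 0 with h | h
        · simp [h]
        · rw [mul_one_div, div_self (by exact_mod_cast h)]

lemma kerM_pow_le_one (H : VisitSub V) (τ : ℕ) (z w : V) : (H.kerM ^ τ) z w ≤ 1 := by
  induction τ generalizing z w with
  | zero => rw [pow_zero, Matrix.one_apply]; split_ifs <;> norm_num
  | succ t ih =>
    rw [pow_succ', Matrix.mul_apply]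
    calc ∑ y, H.kerM z y * (H.kerM ^ t) y w ≤ ∑ y, H.kerM z y * 1 :=
        Finset.sum_le_sum fun y _ => mul_le_mul_of_nonneg_left (ih y w) (kerM_nonneg H z y)
      _ = ∑ y, H.kerM z y := by simp
      _ ≤ 1 := kerM_row_sum H z

lemma summable_ker (H : VisitSub V) {α : ℝ} (h0 : 0 ≤ α) (h1 : α < 1) (z w : V) :
    Summable fun τ : ℕ => α ^ τ * (H.kerM ^ τ) z w := by
  refine Summable.of_nonneg_of_le
    (fun τ => mul_nonneg (pow_nonneg h0 τ) (kerM_pow_nonneg H τ z w))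
    (fun τ => ?_) (summable_geometric_of_lt_one h0 h1)
  calc α ^ τ * (H.kerM ^ τ) z w ≤ α ^ τ * 1 :=
      mul_le_mul_of_nonneg_left (kerM_pow_le_one H τ z w) (pow_nonneg h0 τ)
    _ = α ^ τ := mul_one _

lemma contrib_nonneg (H : VisitSub V) {α : ℝ} (h0 : 0 ≤ α) (h1 : α ≤ 1) (z w : V) :
    0 ≤ H.kernelContrib α z w := by
  unfold VisitSub.kernelContrib
  refine mul_nonneg (div_nonneg (by linarith) (by positivity)) ?_
  exact tsum_nonneg fun τ => mul_nonneg (pow_nonneg h0 τ) (kerM_pow_nonneg H τ z w)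

lemma contrib_pos_of (H : VisitSub V) {α : ℝ} (h0 : 0 < α) (h1 : α < 1)
    (hne : H.verts.Nonempty) (τ : ℕ) (z w : V) (h : 0 < (H.kerM ^ τ) z w) :
    0 < H.kernelContrib α z w := by
  unfold VisitSub.kernelContrib
  have hN : 0 < (H.verts.ncard : ℝ) := by
    exact_mod_cast (Set.ncard_pos (Set.toFinite _)).mpr hne
  refine mul_pos (div_pos (by linarith) hN) ?_
  have hle := Summable.le_tsum (summable_ker H h0.le h1 z w) τ
    (fun j _ => mul_nonneg (pow_nonneg h0.le j) (kerM_pow_nonneg H j z w))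
  have hτ : 0 < α ^ τ * (H.kerM ^ τ) z w := mul_pos (pow_pos h0 τ) h
  linarith

lemma contrib_eq_zero (H : VisitSub V) (α : ℝ) (z w : V)
    (h : ∀ τ, (H.kerM ^ τ) z w = 0) : H.kernelContrib α z w = 0 := by
  unfold VisitSub.kernelContrib
  rw [tsum_congr (fun τ => by rw [h τ, mul_zero]), tsum_zero, mul_zero]

lemma exists_of_contrib_ne_zero (H : VisitSub V) (α : ℝ) (z w : V)
    (h : H.kernelContrib α z w ≠ 0) : ∃ τ, (H.kerM ^ τ) z w ≠ 0 := by
  by_contra hc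
  push_neg at hc
  exact h (contrib_eq_zero H α z w hc)

end AuxMat

section AuxWT
variable {n : ℕ} {G0 : Fin n → Fin n → Prop}

lemma vv_ne_uu : vv n ≠ uu n := by simp [vv, uu]
lemma ww_ne_uu : ww n ≠ uu n := by simp [ww, uu]
lemma uN_ne_uu (j : Fin n) : uN j ≠ uu n := by simp [uN, uu]

lemma GA_ww_vv : GA G0 (ww n) (vv n) := by
  unfold GA; tauto

lemma GA_u'_ww (i : Fin n) : GA G0 (u'N i) (ww n) := by
  unfold GA; right; right; right; right; left; exact ⟨i, rfl, rfl⟩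

lemma GA_from_vv {y : WT n} (h : GA G0 (vv n) y) : y = vv n := by
  rcases h with ⟨h1, h2⟩ | ⟨h1, h2⟩ | ⟨i, h1, h2⟩ | ⟨h1, h2⟩ | ⟨i, h1, h2⟩ | ⟨i, j, hg, h1, h2⟩ <;>
    first
    | exact h2
    | (exfalso; simp [uu, vv, ww, uN, u'N] at h1)

lemma GA_from_ww {y : WT n} (h : GA G0 (ww n) y) : y = vv n := by
  rcases h with ⟨h1, h2⟩ | ⟨h1, h2⟩ | ⟨i, h1, h2⟩ | ⟨h1, h2⟩ | ⟨i, h1, h2⟩ | ⟨i, j, hg, h1, h2⟩ <;>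
    first
    | exact h2
    | (exfalso; simp [uu, vv, ww, uN, u'N] at h1)

lemma GA_from_u' {i : Fin n} {y : WT n} (h : GA G0 (u'N i) y) :
    y = ww n ∨ ∃ j, G0 i j ∧ y = uN j := by
  rcases h with ⟨h1, h2⟩ | ⟨h1, h2⟩ | ⟨k, h1, h2⟩ | ⟨h1, h2⟩ | ⟨k, h1, h2⟩ | ⟨k, j, hg, h1, h2⟩
  · exfalso; simp [uu, u'N] at h1
  · exfalso; simp [vv, u'N] at h1
  · exfalso; simp [uN, u'N] at h1
  · exfalso; simp [ww, u'N] at h1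
  · exact Or.inl h2
  · refine Or.inr ⟨j, ?_, h2⟩
    have : k = i := by simpa [u'N] using h1.symm
    rwa [this] at hg

end AuxWT

/-- DOMINATING SET reduction, direction 2: if the reduction graph `G` built from `G0`
admits a ranking subgraph of kernel size `3 + m` for `u ≻ v`, then `G0` admits a
dominating set of size `m`. -/
theorem stmt_16 (n m : ℕ) (hm : m ≤ n) (G0 : Fin n → Fin n → Prop)
    (hnd : ∀ i, ∃ j, G0 i j)
    (α ε : ℝ) (hα : α ∈ Set.Ioo (0:ℝ) 1) (hε : 0 ≤ ε)
    (H : VisitSub (WT n)) (hH : H.IsVisit) (hc : H.Compatible (GA G0))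
    (hsize : H.kernel.ncard = 3 + m)
    (hrank : RankChar α ε H (uu n) (vv n)) :
    ∃ D : Finset (Fin n), D.card = m ∧ Dominating G0 D := by
  classical
  obtain ⟨huK, hvK, hscore, hfront⟩ := hrank
  obtain ⟨hKV, hends, hfr, hker⟩ := hH
  obtain ⟨hα0, hα1⟩ := hα
  have hne : H.verts.Nonempty := ⟨_, hKV huK⟩
  have hSclosed : ∀ z ∈ ({vv n, ww n} : Set (WT n)), ∀ y, H.arcs z y →
      y ∈ ({vv n, ww n} : Set (WT n)) := by
    rintro z (rfl | rfl) y hy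
    · exact Or.inl (GA_from_vv (hc.1 _ _ hy))
    · exact Or.inl (GA_from_ww (hc.1 _ _ hy))
  have huuS : uu n ∉ ({vv n, ww n} : Set (WT n)) := by
    rintro (h | h)
    · exact vv_ne_uu h.symm
    · exact ww_ne_uu h.symm
  have hpowS := kerM_pow_closed H hSclosed huuS
  -- w ∈ kernel
  have hwv : H.arcs (ww n) (vv n) := (hc.2 _ _ (Or.inr hvK)).mp GA_ww_vv
  have hwK : ww n ∈ H.kernel := by
    by_contra hw
    have hwV : ww n ∈ H.verts := (hends _ _ hwv).1
    have h4 := hfront (ww n) ⟨hwV, hw⟩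
    have hfilter : Finset.univ.filter (fun z => H.arcs (ww n) z) = {vv n} := by
      ext z
      simp only [Finset.mem_filter, Finset.mem_univ, true_and, Finset.mem_singleton]
      constructor
      · intro h; exact GA_from_ww (hc.1 _ _ h)
      · rintro rfl; exact hwv
    rw [hfilter, Finset.sum_singleton, Finset.sum_singleton] at h4
    have h0 : H.kernelContrib α (vv n) (uu n) = 0 :=
      contrib_eq_zero H α _ _ (fun τ => hpowS τ (vv n) (Or.inl rfl))
    have hpos : 0 < H.kernelContrib α (vv n) (vv n) := by
      refine contrib_pos_of H hα0 hα1 hne 0 _ _ ?_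
      rw [kerM_pow_zero_eq]; norm_num
    linarith
  -- the domination key
  have hkey : ∀ i : Fin n, u'N i ∉ H.kernel → ∃ j, G0 i j ∧ uN j ∈ H.kernel := by
    intro i hiK
    have hu'w : H.arcs (u'N i) (ww n) := (hc.2 _ _ (Or.inr hwK)).mp (GA_u'_ww i)
    have hu'V : u'N i ∈ H.verts := (hends _ _ hu'w).1
    have h4 := hfront (u'N i) ⟨hu'V, hiK⟩
    have hdpos : 0 < H.outDegH (ww n) := by
      refine Finset.card_pos.mpr ⟨vv n, ?_⟩
      simp [hwv]
    have hkerwv : 0 < H.kerM (ww n) (vv n) := by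
      unfold VisitSub.kerM
      rw [if_pos ⟨hwK, hvK, hwv⟩]
      have : (0:ℝ) < (H.outDegH (ww n) : ℝ) := by exact_mod_cast hdpos
      positivity
    have hcwv : 0 < H.kernelContrib α (ww n) (vv n) := by
      refine contrib_pos_of H hα0 hα1 hne 1 _ _ ?_
      rwa [kerM_pow_one]
    have hmemw : ww n ∈ Finset.univ.filter (fun z => H.arcs (u'N i) z) := by
      simp [hu'w]
    have hRHS : H.kernelContrib α (ww n) (vv n) ≤
        ∑ z ∈ Finset.univ.filter (fun z => H.arcs (u'N i) z), H.kernelContrib α z (vv n) :=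
      Finset.single_le_sum (fun z _ => contrib_nonneg H hα0.le hα1.le z _) hmemw
    have hLHSpos : 0 <
        ∑ z ∈ Finset.univ.filter (fun z => H.arcs (u'N i) z), H.kernelContrib α z (uu n) :=
      lt_of_lt_of_le (lt_of_lt_of_le hcwv hRHS) h4
    obtain ⟨z, hzmem, hz⟩ := Finset.exists_ne_zero_of_sum_ne_zero hLHSpos.ne'
    have hzarcs : H.arcs (u'N i) z := (Finset.mem_filter.mp hzmem).2
    obtain ⟨τ, hτ⟩ := exists_of_contrib_ne_zero H α _ _ hz
    rcases GA_from_u' (hc.1 _ _ hzarcs) with hzw | ⟨j, hgj, hzj⟩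
    · exfalso; rw [hzw] at hτ; exact hτ (hpowS τ (ww n) (Or.inr rfl))
    · subst hzj
      refine ⟨j, hgj, ?_⟩
      cases τ with
      | zero =>
        exfalso
        rw [kerM_pow_zero_ne H (uN_ne_uu j)] at hτ
        exact hτ rfl
      | succ t =>
        rw [kerM_pow_succ] at hτ
        obtain ⟨y, _, hy⟩ := Finset.exists_ne_zero_of_sum_ne_zero hτ
        exact (arcs_of_kerM_ne H (left_ne_zero_of_mul hy)).1
  -- degenerate case n = 0
  rcases Nat.eq_zero_or_pos n with hn0 | hn
  · refine ⟨∅, ?_, ?_⟩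
    · have : m = 0 := by omega
      simp [this]
    · intro i
      exact absurd i.isLt (by omega)
  -- counting
  have hfin : H.kernel.Finite := Set.toFinite _
  set KF : Finset (WT n) := hfin.toFinset with hKFdef
  have hKFcard : KF.card = 3 + m := by
    rw [← Set.ncard_eq_toFinset_card _ hfin, hsize]
  have hspec : ({uu n, vv n, ww n} : Finset (WT n)) ⊆ KF := by
    intro x hx
    simp only [Finset.mem_insert, Finset.mem_singleton] at hx
    rw [hKFdef, Set.Finite.mem_toFinset]
    rcases hx with rfl | rfl | rfl
    · exact huK
    · exact hvK
    · exact hwK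
  have hspeccard : ({uu n, vv n, ww n} : Finset (WT n)).card = 3 := by
    rw [Finset.card_insert_of_notMem (by simp [uu, vv, ww]),
      Finset.card_insert_of_notMem (by simp [vv, ww]), Finset.card_singleton]
  set T : Finset (WT n) := KF \ {uu n, vv n, ww n} with hTdef
  have hTcard : T.card = m := by
    rw [hTdef, Finset.card_sdiff_of_subset hspec, hKFcard, hspeccard]
    omega
  set f : Fin n → Fin n := fun i => (hnd i).choose with hfdef
  have hf : ∀ i, G0 i (f i) := fun i => (hnd i).choose_spec
  set g : WT n → Fin n := Sum.elim id (Sum.elim f (fun _ => ⟨0, hn⟩)) with hgdef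
  set D0 : Finset (Fin n) := T.image g with hD0def
  have hD0card : D0.card ≤ m := le_trans Finset.card_image_le (le_of_eq hTcard)
  obtain ⟨D, hD0D, _, hDcard⟩ := Finset.exists_subsuperset_card_eq (Finset.subset_univ D0)
    hD0card (by simpa using hm)
  refine ⟨D, hDcard, ?_⟩
  intro i _
  by_cases hiK : u'N i ∈ H.kernel
  · refine ⟨f i, hD0D ?_, hf i⟩
    refine Finset.mem_image.mpr ⟨u'N i, ?_, rfl⟩
    rw [hTdef, Finset.mem_sdiff]
    constructor
    · rw [hKFdef, Set.Finite.mem_toFinset]; exact hiK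
    · simp [u'N, uu, vv, ww]
  · obtain ⟨j, hgj, hjK⟩ := hkey i hiK
    refine ⟨j, hD0D ?_, hgj⟩
    refine Finset.mem_image.mpr ⟨uN j, ?_, rfl⟩
    rw [hTdef, Finset.mem_sdiff]
    constructor
    · rw [hKFdef, Set.Finite.mem_toFinset]; exact hjK
    · simp [uN, uu, vv, ww]
end
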